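/- arXiv:2411.07779 — 2 statements merged into one kernel-verified Lean document; each statement's English description precedes it below -/
import Mathlib

section
/- Let N ≥ 1, let 𝓵 = (ℓ₀,…,ℓ_{N-1}) ∈ ℕ̄₊^{N}, and let k₀ = ⋯ = k_{N-1} = ∞. Then for every permutation σ of {0,…,N−1} with σ(N−1) = N−1, writing σ𝓵 = (ℓ_{σ⁻¹(0)},…,ℓ_{σ⁻¹(N-1)}), one has the identity of formal power series γ_{𝐤∗𝓵} = γ_{𝐤∗σ𝓵}, where 𝐤 = (∞,…,∞) ∈ ℕ̄₊^{N}. -/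
open MvPowerSeries Finset

noncomputable section

/-- The ring `R = ℂ[[α,β]]` of formal power series in two commuting variables. -/
abbrev R2 : Type := MvPowerSeries (Fin 2) ℂ

/-- The variable `α`. -/
def pa : R2 := MvPowerSeries.X 0
/-- The variable `β`. -/
def pb : R2 := MvPowerSeries.X 1

/-- The matrix `A₀ = [[1,0],[α,β]]`. -/
def A0 : Matrix (Fin 2) (Fin 2) R2 := !![1, 0; pa, pb]
/-- The matrix `A₁ = [[α,β],[0,1]]`. -/
def A1 : Matrix (Fin 2) (Fin 2) R2 := !![pa, pb; 0, 1]
/-- The matrix `A₀^∞ = [[1,0],[α(1−β)⁻¹,0]]`. -/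
def A0inf : Matrix (Fin 2) (Fin 2) R2 := !![1, 0; pa * (1 - pb)⁻¹, 0]
/-- The matrix `A₁^∞ = [[0,β(1−α)⁻¹],[0,1]]`. -/
def A1inf : Matrix (Fin 2) (Fin 2) R2 := !![0, pb * (1 - pa)⁻¹; 0, 1]

/-- Extended power: `A^k` for `k ∈ ℕ`, and `Ainf` for `k = ∞`. -/
def powE (A Ainf : Matrix (Fin 2) (Fin 2) R2) : ℕ∞ → Matrix (Fin 2) (Fin 2) R2 :=
  fun k => WithTop.recTopCoe Ainf (fun n => A ^ n) k

/-- `M(𝐭) = A₁^{k₀} A₀^{ℓ₀} ⋯ A₁^{k_{N-1}} A₀^{ℓ_{N-1}}`, where the extended binary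
expansion `𝐭 = (k₀,ℓ₀,…,k_{N-1},ℓ_{N-1})` is encoded as `t : Fin (2*N) → ℕ∞`
(`k_j = t (2j)`, `ℓ_j = t (2j+1)`). -/
def Mmat {N : ℕ} (t : Fin (2 * N) → ℕ∞) : Matrix (Fin 2) (Fin 2) R2 :=
  ((List.finRange N).map (fun j =>
    powE A1 A1inf (t ⟨2 * j.val, by have := j.isLt; omega⟩) *
    powE A0 A0inf (t ⟨2 * j.val + 1, by have := j.isLt; omega⟩))).prod

/-- `γ_𝐭`, the (1,1) entry of `M(𝐭)`. -/
def gam {N : ℕ} (t : Fin (2 * N) → ℕ∞) : R2 := Mmat t 0 0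

/-- Interleaving `𝐤∗𝓵 = (k₀,ℓ₀,k₁,ℓ₁,…,k_{N-1},ℓ_{N-1})`. -/
def interleave {N : ℕ} (k l : Fin N → ℕ∞) : Fin (2 * N) → ℕ∞ :=
  fun i =>
    if i.val % 2 = 0 then k ⟨i.val / 2, by have := i.isLt; omega⟩
    else l ⟨i.val / 2, by have := i.isLt; omega⟩


/-! Since `A₁^∞ X A₁^∞ = A1infCoeff X • A₁^∞` for every matrix `X`, the product
`M(∞,ℓ₀,…,∞,ℓ_{N-1}) = A₁^∞ B₀ ⋯ A₁^∞ B_{N-1}` (with `B_j = A₀^{ℓ_j}`) collapses to the scalar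
`A1infCoeff B₀ ⋯ A1infCoeff B_{N-2}` times `A₁^∞ B_{N-1}`. The scalars commute, so permuting
`B₀, …, B_{N-2}` does not change `γ`. -/

theorem List.prod_map_mul_left_mul_eq_smul {R A : Type*} [CommSemiring R] [Semiring A]
    [Algebra R A] {p : A} {c : A → R} (hp : ∀ x, p * x * p = c x • p) (xs : List A) :
    (xs.map (p * ·)).prod * p = (xs.map c).prod • p := by
  induction xs with
  | nil => simp
  | cons x xs ih =>
    rw [List.map_cons, List.prod_cons, mul_assoc, ih, mul_smul_comm, hp, List.map_cons,
      List.prod_cons, smul_smul, mul_comm]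

def A1infCoeff (X : Matrix (Fin 2) (Fin 2) R2) : R2 := pb * (1 - pa)⁻¹ * X 1 0 + X 1 1

theorem A1inf_mul_mul_A1inf (X : Matrix (Fin 2) (Fin 2) R2) :
    A1inf * X * A1inf = A1infCoeff X • A1inf := by
  refine Matrix.ext fun i j => ?_
  fin_cases i <;> fin_cases j <;>
    simp [A1inf, A1infCoeff, Matrix.mul_apply, Matrix.vecMul, dotProduct, Fin.sum_univ_two] <;>
    ring

theorem Mmat_interleave_top {N : ℕ} (l : Fin N → ℕ∞) :
    Mmat (interleave (fun _ => ⊤) l) =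
      ((List.finRange N).map fun j => A1inf * powE A0 A0inf (l j)).prod := by
  simp only [Mmat, interleave, Nat.mul_mod_right, Nat.mul_add_mod_self_left, if_true,
    Nat.mul_add_div two_pos, Nat.mul_div_cancel_left _ two_pos]
  rfl

theorem prod_map_A1inf_mul {n : ℕ} (B : Fin (n + 1) → Matrix (Fin 2) (Fin 2) R2) :
    ((List.finRange (n + 1)).map fun j => A1inf * B j).prod =
      (∏ i : Fin n, A1infCoeff (B i.castSucc)) • (A1inf * B (Fin.last n)) := by
  have hmap : List.ofFn (fun i : Fin n => A1inf * B i.castSucc) =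
      (List.ofFn fun i => B i.castSucc).map (A1inf * ·) := List.map_ofFn.symm
  rw [← List.ofFn_eq_map, List.ofFn_succ', List.prod_concat, ← mul_assoc, hmap,
    List.prod_map_mul_left_mul_eq_smul A1inf_mul_mul_A1inf, List.map_ofFn, List.prod_ofFn,
    smul_mul_assoc]
  rfl

theorem gam_interleave_top (n : ℕ) (l : Fin (n + 1) → ℕ∞) :
    gam (interleave (fun _ => ⊤) l) =
      (∏ i ∈ {Fin.last n}ᶜ, A1infCoeff (powE A0 A0inf (l i))) *
        (A1inf * powE A0 A0inf (l (Fin.last n))) 0 0 := by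
  rw [gam, Mmat_interleave_top, prod_map_A1inf_mul, Matrix.smul_apply, smul_eq_mul,
    ← Fin.image_castSucc, Finset.prod_image fun i _ j _ h => Fin.castSucc_injective n h]

/-- **Corollary (permuting blocks of 0s separated by infinite blocks of 1s).**
If `k₀ = ⋯ = k_{N-1} = ∞`, then for every permutation `σ` of `{0,…,N−1}` fixing `N−1`
we have `γ_{𝐤∗𝓵} = γ_{𝐤∗σ𝓵}`, where `σ𝓵 = (ℓ_{σ⁻¹(0)},…,ℓ_{σ⁻¹(N-1)})`. -/
theorem gamma_perm_zeros_blocks (N : ℕ) (hN : 1 ≤ N) (l : Fin N → ℕ∞)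
    (σ : Equiv.Perm (Fin N)) (hσ : σ ⟨N - 1, by omega⟩ = ⟨N - 1, by omega⟩) :
    gam (interleave (fun _ => (⊤ : ℕ∞)) l) =
      gam (interleave (fun _ => (⊤ : ℕ∞)) (fun j => l (σ.symm j))) := by
  obtain ⟨n, rfl⟩ : ∃ n, N = n + 1 := ⟨N - 1, by omega⟩
  have hσ_last : σ.symm (Fin.last n) = Fin.last n := σ.symm_apply_eq.mpr hσ.symm
  rw [gam_interleave_top, gam_interleave_top, hσ_last]
  congr 1
  exact (Equiv.Perm.prod_comp σ.symm _ _ fun i (hi : σ.symm i ≠ i) => by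
    simpa using fun h : i = Fin.last n => hi (h ▸ hσ_last)).symm
end
end

section
/- (Digit reversal property.) Let N ≥ 1 and let k₀,…,k_{N-1} ≥ 1 and ℓ₀,…,ℓ_{N-2} ≥ 1 be finite positive integers. Then one has the identity of formal power series γ_{(k₀,ℓ₀,k₁,ℓ₁,…,k_{N-2},ℓ_{N-2},k_{N-1},∞)} = γ_{(k_{N-1},ℓ_{N-2},k_{N-2},ℓ_{N-3},…,k₁,ℓ₀,k₀,∞)}. (In terms of integers: if t has binary expansion 1^{k_{N-1}} 0^{ℓ_{N-2}} ⋯ 0^{ℓ₀} 1^{k₀} and t′ is obtained from t by reversing its binary expansion, then γ_t = γ_{t′}.) -/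
open MvPowerSeries Finset

noncomputable section

open Matrix

/-!
When the last digit is `∞`, `γ_𝐭 = (W A₀^∞)₁₁` where `W = A₁^{k₀} A₀^{ℓ₀} ⋯ A₁^{k_{N-1}}` is a
word with an odd number of blocks; reversing the digits reverses the blocks of `W`, and since the
number of blocks is odd each block keeps its letter.

The symmetric matrix `S = [[β(1-β), αβ], [αβ, α(1-α)]]` satisfies `Aᵢ S = S Aᵢᵀ` for `i = 0, 1`,
so for any word `W = X₁ ⋯ Xₙ` in `A₀, A₁` we get `W S = S (Xₙ ⋯ X₁)ᵀ`, and as `S` is symmetric the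
`(1,1)` entries of `W S` and of `W^rev S` agree. The first column of `S` is `β(1-β)` times the
first column of `A₀^∞`, so `(W S)₁₁ = β(1-β) (W A₀^∞)₁₁`, and `β(1-β)` is a non-zero-divisor in
`ℂ[[α,β]]`.
-/

theorem Matrix.list_prod_mul_eq_mul_transpose_reverse_prod {n α : Type*} [CommSemiring α]
    [Fintype n] [DecidableEq n] (S : Matrix n n α) (l : List (Matrix n n α))
    (h : ∀ X ∈ l, X * S = S * Xᵀ) : l.prod * S = S * l.reverse.prodᵀ := by
  induction l with
  | nil => simp
  | cons X l ih =>
    calc (X :: l).prod * S = X * (l.prod * S) := by rw [List.prod_cons, mul_assoc]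
      _ = X * S * l.reverse.prodᵀ := by
        rw [ih fun Y hY => h Y (List.mem_cons_of_mem _ hY), mul_assoc]
      _ = S * (X :: l).reverse.prodᵀ := by
        rw [h X List.mem_cons_self, List.reverse_cons, List.prod_append, List.prod_singleton,
          Matrix.transpose_mul, mul_assoc]

theorem Matrix.pow_mul_eq_mul_transpose_pow {n α : Type*} [CommSemiring α] [Fintype n]
    [DecidableEq n] {X S : Matrix n n α} (h : X * S = S * Xᵀ) (k : ℕ) :
    X ^ k * S = S * (X ^ k)ᵀ := by
  rw [Matrix.transpose_pow]
  exact (SemiconjBy.pow_right (a := S) h.symm k).symm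

theorem Matrix.IsSymm.mul_transpose_apply_self {n α : Type*} [CommSemiring α] [Fintype n]
    {S : Matrix n n α} (hS : S.IsSymm) (Q : Matrix n n α) (i : n) :
    (S * Qᵀ) i i = (Q * S) i i := by
  rw [← hS.eq, ← Matrix.transpose_mul, Matrix.transpose_apply, hS.eq]

theorem List.prod_map_range_pairs {M : Type*} [Monoid M] (f : ℕ → M) (m : ℕ) :
    ((List.range m).map fun j => f (2 * j) * f (2 * j + 1)).prod
      = ((List.range (2 * m)).map f).prod := by
  induction m with
  | zero => simp
  | succ m ih =>
    rw [List.range_succ, show 2 * (m + 1) = 2 * m + 1 + 1 by ring, List.range_succ,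
      List.range_succ]
    simp [ih]

theorem List.map_finRange_eq_map_range {α : Type*} (f : ℕ → α) (m : ℕ) :
    (List.finRange m).map (fun j : Fin m => f j) = (List.range m).map f := by
  rw [← List.map_coe_finRange_eq_range, List.map_map]
  rfl

theorem powE_coe (A Ainf : Matrix (Fin 2) (Fin 2) R2) (n : ℕ) : powE A Ainf n = A ^ n := rfl

theorem powE_top (A Ainf : Matrix (Fin 2) (Fin 2) R2) : powE A Ainf ⊤ = Ainf := rfl

def letter (i : ℕ) : Matrix (Fin 2) (Fin 2) R2 := if i % 2 = 0 then A1 else A0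

def wordMat (a : ℕ → ℕ) (n : ℕ) : Matrix (Fin 2) (Fin 2) R2 :=
  ((List.range n).map fun i => letter i ^ a i).prod

theorem Mmat_eq_wordMat_mul_A0inf {m : ℕ} (t : Fin (2 * (m + 1)) → ℕ∞) (a : ℕ → ℕ)
    (ha : ∀ i (hi : i < 2 * m + 1), t ⟨i, by omega⟩ = a i) (htop : t ⟨2 * m + 1, by omega⟩ = ⊤) :
    Mmat t = wordMat a (2 * m + 1) * A0inf := by
  have hpair : ∀ j : Fin m,
      powE A1 A1inf (t ⟨2 * j.castSucc.val, by omega⟩) *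
        powE A0 A0inf (t ⟨2 * j.castSucc.val + 1, by omega⟩)
      = letter (2 * j) ^ a (2 * j) * letter (2 * j + 1) ^ a (2 * j + 1) := fun j => by
    simp only [Fin.val_castSucc, ha _ (by omega : 2 * j.val < 2 * m + 1),
      ha _ (by omega : 2 * j.val + 1 < 2 * m + 1), letter, Nat.mul_mod_right,
      Nat.mul_add_mod_self_left]
    rfl
  unfold Mmat wordMat
  simp only [List.finRange_succ_last, List.map_append, List.map_map, Function.comp_def]
  rw [List.map_congr_left fun j _ => hpair j, List.map_finRange_eq_map_range
      fun j => letter (2 * j) ^ a (2 * j) * letter (2 * j + 1) ^ a (2 * j + 1),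
    List.range_succ, List.map_append, List.prod_append, List.prod_append,
    List.prod_map_range_pairs (fun i => letter i ^ a i)]
  simp [ha (2 * m) (by omega), htop, powE_coe, powE_top, letter, mul_assoc]

def Smat : Matrix (Fin 2) (Fin 2) R2 :=
  !![pb * (1 - pb), pa * pb; pa * pb, pa * (1 - pa)]

theorem Smat_isSymm : Smat.IsSymm := by
  refine Matrix.ext fun i j => ?_
  fin_cases i <;> fin_cases j <;> simp [Smat]

theorem A0_mul_Smat : A0 * Smat = Smat * A0ᵀ := by
  refine Matrix.ext fun i j => ?_
  fin_cases i <;> fin_cases j <;> simp [A0, Smat, Matrix.mul_apply, Fin.sum_univ_two] <;> ring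

theorem A1_mul_Smat : A1 * Smat = Smat * A1ᵀ := by
  refine Matrix.ext fun i j => ?_
  fin_cases i <;> fin_cases j <;> simp [A1, Smat, Matrix.mul_apply, Fin.sum_univ_two] <;> ring

theorem letter_mul_Smat (i : ℕ) : letter i * Smat = Smat * (letter i)ᵀ := by
  unfold letter
  split_ifs
  exacts [A1_mul_Smat, A0_mul_Smat]

theorem wordMat_mul_Smat (a : ℕ → ℕ) (m : ℕ) :
    wordMat a (2 * m + 1) * Smat = Smat * (wordMat (fun i => a (2 * m - i)) (2 * m + 1))ᵀ := by
  have hrev : (List.range (2 * m + 1)).reverse = (List.range (2 * m + 1)).map (2 * m - ·) := by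
    rw [List.range_eq_range', List.reverse_range']
    simp [List.range_eq_range']
  unfold wordMat
  rw [Matrix.list_prod_mul_eq_mul_transpose_reverse_prod]
  · rw [← List.map_reverse, hrev, List.map_map]
    congr 3
    refine List.map_congr_left fun i hi => ?_
    have hi : i < 2 * m + 1 := List.mem_range.mp hi
    simp only [Function.comp_apply, letter, show (2 * m - i) % 2 = i % 2 by omega]
  · simp only [List.mem_map]
    rintro _ ⟨i, -, rfl⟩
    exact Matrix.pow_mul_eq_mul_transpose_pow (letter_mul_Smat i) _

theorem mul_Smat_apply_zero_zero (P : Matrix (Fin 2) (Fin 2) R2) :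
    (P * Smat) 0 0 = pb * (1 - pb) * (P * A0inf) 0 0 := by
  have hinv : (1 - pb) * (1 - pb)⁻¹ = 1 :=
    MvPowerSeries.mul_inv_cancel _ (by simp [pb, MvPowerSeries.constantCoeff_X])
  simp only [Matrix.mul_apply, Fin.sum_univ_two, Smat, A0inf, Matrix.of_apply,
    Matrix.cons_val', Matrix.cons_val_zero, Matrix.cons_val_one, Matrix.empty_val',
    Matrix.cons_val_fin_one]
  linear_combination (-(pb * P 0 1 * pa)) * hinv

theorem pb_mul_one_sub_pb_ne_zero : pb * (1 - pb) ≠ 0 := by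
  refine mul_ne_zero (fun h => ?_) (fun h => ?_)
  · simpa [pb, MvPowerSeries.coeff_X] using
      congrArg (MvPowerSeries.coeff (Finsupp.single (1 : Fin 2) 1)) h
  · simpa [pb] using congrArg MvPowerSeries.constantCoeff h

theorem gam_eq_gam_of_reverse {m : ℕ} (t t' : Fin (2 * (m + 1)) → ℕ∞) (a : ℕ → ℕ)
    (ht : ∀ i (hi : i < 2 * m + 1), t ⟨i, by omega⟩ = a i)
    (ht' : ∀ i (hi : i < 2 * m + 1), t' ⟨i, by omega⟩ = a (2 * m - i))
    (htop : t ⟨2 * m + 1, by omega⟩ = ⊤) (htop' : t' ⟨2 * m + 1, by omega⟩ = ⊤) :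
    gam t = gam t' := by
  apply mul_left_cancel₀ pb_mul_one_sub_pb_ne_zero
  rw [gam, gam, Mmat_eq_wordMat_mul_A0inf t a ht htop, Mmat_eq_wordMat_mul_A0inf t' _ ht' htop',
    ← mul_Smat_apply_zero_zero, ← mul_Smat_apply_zero_zero, wordMat_mul_Smat,
    Smat_isSymm.mul_transpose_apply_self]

/-- **Corollary (digit reversal property).**
For finite positive block lengths `k₀,…,k_{N-1} ≥ 1` and `ℓ₀,…,ℓ_{N-2} ≥ 1`,
`γ_{(k₀,ℓ₀,k₁,ℓ₁,…,k_{N-2},ℓ_{N-2},k_{N-1},∞)}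
  = γ_{(k_{N-1},ℓ_{N-2},k_{N-2},ℓ_{N-3},…,k₁,ℓ₀,k₀,∞)}`;
i.e. if `t'` is obtained from `t` by reversing its binary expansion then `γ_t = γ_{t'}`. -/
theorem gamma_digit_reversal (N : ℕ) (k : Fin N → ℕ) (l : Fin (N - 1) → ℕ) :
    gam (interleave (fun j : Fin N => (k j : ℕ∞))
          (fun j : Fin N => if h : j.val < N - 1 then ((l ⟨j.val, h⟩ : ℕ) : ℕ∞) else ⊤)) =
      gam (interleave
          (fun j : Fin N => (k ⟨N - 1 - j.val, by omega⟩ : ℕ∞))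
          (fun j : Fin N =>
            if h : j.val < N - 1 then ((l ⟨N - 2 - j.val, by omega⟩ : ℕ) : ℕ∞) else ⊤)) := by
  rcases N with _ | m
  · rfl
  refine gam_eq_gam_of_reverse _ _
    (fun i => if h : i < 2 * m + 1 then
      if hi : i % 2 = 0 then k ⟨i / 2, by omega⟩ else l ⟨i / 2, by omega⟩ else 0) ?_ ?_ ?_ ?_
  all_goals
    intros
    simp only [interleave]
    split_ifs <;> first | omega | (congr 3 <;> omega)
end
end
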